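/- Let W1, W2 be irreducible graded sl2-representations of dimensions r1, r2 and highest-weight-vector parities w1, w2. Define m := Tr(h on the even part of Hom(W1,W2)^e) + Tr(h on the even part of Hom(W2,W1)^e) − r1·r2, where Hom(Wi,Wj)^e denotes e-equivariant maps (the kernel of the adjoint action of e). Then: m = −min(r1,r2) if r1 ≢ r2 mod 2; m = −2·min(r1,r2) if r1 ≡ r2 ≡ 0 mod 2 and w1 = w2; m = 0 if r1 ≡ r2 ≡ 0 mod 2 and w1 ≠ w2; m = |r1 − r2| − 1 if r1 ≡ r2 ≡ 1 mod 2 and w1 = w2; m = −(r1 + r2 − 1) if r1 ≡ r2 ≡ 1 mod 2 and w1 ≠ w2. -/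

import Mathlib

variable {K V : Type*} [Field K] [AddCommGroup V] [Module K V]

/-- An sl2-triple of linear endomorphisms: [h,e]=2e, [h,f]=-2f, [e,f]=h. -/
def Sl2Rel (e h f : Module.End K V) : Prop :=
  h * e - e * h = 2 • e ∧ h * f - f * h = -(2 • f) ∧ e * f - f * e = h

/-- A submodule invariant under the sl2-action. -/
def Sl2Inv (e h f : Module.End K V) (W : Submodule K V) : Prop :=
  (∀ x ∈ W, e x ∈ W) ∧ (∀ x ∈ W, h x ∈ W) ∧ (∀ x ∈ W, f x ∈ W)

/-- A Z/2Z-grading V = V0 ⊕ V1 compatible with the graded sl2 (h even, e and f odd). -/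
def Sl2Grading (e h f : Module.End K V) (V0 V1 : Submodule K V) : Prop :=
  IsCompl V0 V1 ∧ (∀ x ∈ V0, h x ∈ V0) ∧ (∀ x ∈ V1, h x ∈ V1) ∧
    (∀ x ∈ V0, e x ∈ V1) ∧ (∀ x ∈ V1, e x ∈ V0) ∧
    (∀ x ∈ V0, f x ∈ V1) ∧ (∀ x ∈ V1, f x ∈ V0)

/-- A submodule which is graded with respect to the grading (V0, V1). -/
def Sl2GradedSub (V0 V1 W : Submodule K V) : Prop :=
  W = (W ⊓ V0) ⊔ (W ⊓ V1)

/-!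
An irreducible graded module `V_λ^w` with highest weight vector `v` has a string basis
`u_0, …, u_λ` (`u_j` a multiple of `f^j v`) on which `e` lowers the index by one, `h` acts by
`λ - 2j` and `u_j` has parity `w + j`. A map `V_{λ1} → V_{λ2}` commuting with `e` is determined
by the image of the lowest vector `u_{λ1}`, which must be killed by `e^{λ1+1}`. Hence the even
part of `Hom(V_{λ1}, V_{λ2})^e` has the basis `φ_j : u_{λ1} ↦ u'_j` for `j < min(r1, r2)` with
`j ≡ w1 + w2 + λ1 (mod 2)`, and `φ_j` is an `h`-eigenvector of weight `λ1 + λ2 - 2j`. Both traces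
are therefore sums of an arithmetic progression over one parity class, and the five cases are
the closed forms of these sums.
-/

open Finset

lemma ZMod.forall_two {P : ZMod 2 → Prop} : (∀ p, P p) ↔ P 0 ∧ P 1 := Fin.forall_fin_two

lemma natCast_min_add_natCast_max (a b : ℕ) :
    ((min a b : ℕ) : K) + (max a b : ℕ) = a + b := by
  rw [← Nat.cast_add, min_add_max, Nat.cast_add]

lemma natCast_min_mul_natCast_max (a b : ℕ) :
    ((min a b : ℕ) : K) * (max a b : ℕ) = ((a * b : ℕ) : K) := by
  rw [← Nat.cast_mul, min_mul_max]

lemma LinearMap.trace_eq_sum_of_apply_basis {M ι : Type*} [AddCommGroup M] [Module K M]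
    [Fintype ι] [DecidableEq ι] (b : Module.Basis ι K M) (T : Module.End K M) (d : ι → K)
    (hd : ∀ i, T (b i) = d i • b i) : LinearMap.trace K M T = ∑ i, d i := by
  simp [LinearMap.trace_eq_matrix_trace K b, Matrix.trace, LinearMap.toMatrix_apply, hd]

def gradedPart (V0 V1 : Submodule K V) (p : ZMod 2) : Submodule K V :=
  if p = 0 then V0 else V1

section gradedPart

variable {V0 V1 : Submodule K V}

@[simp] lemma gradedPart_zero : gradedPart V0 V1 0 = V0 := if_pos rfl

@[simp] lemma gradedPart_one : gradedPart V0 V1 1 = V1 := if_neg one_ne_zero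

lemma mem_gradedPart_iff {x : V} {p : ZMod 2} :
    x ∈ gradedPart V0 V1 p ↔ if p = 0 then x ∈ V0 else x ∈ V1 := by
  unfold gradedPart
  split_ifs <;> rfl

lemma IsCompl.gradedPart (hc : IsCompl V0 V1) (p : ZMod 2) :
    IsCompl (gradedPart V0 V1 p) (gradedPart V0 V1 (p + 1)) := by
  revert p
  rw [ZMod.forall_two]
  exact ⟨by simpa using hc, by simpa [show (1 + 1 : ZMod 2) = 0 from rfl] using hc.symm⟩

lemma Sl2Grading.f_mem {e h f : Module.End K V} (hgr : Sl2Grading e h f V0 V1) {x : V}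
    {p : ZMod 2} (hx : x ∈ gradedPart V0 V1 p) : f x ∈ gradedPart V0 V1 (p + 1) := by
  obtain ⟨-, -, -, -, -, hf0, hf1⟩ := hgr
  revert p
  rw [ZMod.forall_two]
  exact ⟨by simpa using hf0 x, by simpa [show (1 + 1 : ZMod 2) = 0 from rfl] using hf1 x⟩

variable {W : Type*} [AddCommGroup W] [Module K W]

lemma forall_mem_gradedPart_iff {W0 W1 : Submodule K W} (φ : V →ₗ[K] W) :
    ((∀ x ∈ V0, φ x ∈ W0) ∧ (∀ x ∈ V1, φ x ∈ W1)) ↔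
      ∀ p, ∀ x ∈ gradedPart V0 V1 p, φ x ∈ gradedPart W0 W1 p := by
  rw [ZMod.forall_two]
  simp

end gradedPart

def parityRange (n : ℕ) (c : ZMod 2) : Finset ℕ := (range n).filter fun j => (j : ZMod 2) = c

lemma mem_parityRange {n j : ℕ} {c : ZMod 2} : j ∈ parityRange n c ↔ j < n ∧ (j : ZMod 2) = c := by
  simp [parityRange]

def paritySum (X : K) (n : ℕ) (c : ZMod 2) : K := ∑ j ∈ parityRange n c, (X - 2 * j)

section paritySum

variable (X : K)

lemma paritySum_zero (c : ZMod 2) : paritySum X 0 c = 0 := rfl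

lemma paritySum_succ (n : ℕ) (c : ZMod 2) :
    paritySum X (n + 1) c = paritySum X n c + if (n : ZMod 2) = c then X - 2 * n else 0 := by
  simp only [paritySum, parityRange, sum_filter, sum_range_succ]

lemma paritySum_add_paritySum_add_one (n : ℕ) (c : ZMod 2) :
    paritySum X n c + paritySum X n (c + 1) = n * X - (n ^ 2 - n) := by
  induction n with
  | zero => simp [paritySum_zero]
  | succ n ih =>
    have : ∀ a c : ZMod 2, a = c + 1 ↔ a ≠ c := by decide
    rw [paritySum_succ, paritySum_succ]
    by_cases hn : (n : ZMod 2) = c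
    · rw [if_pos hn, if_neg fun h => (this _ _).mp h hn]
      push_cast
      linear_combination ih
    · rw [if_neg hn, if_pos ((this _ _).mpr hn)]
      push_cast
      linear_combination ih

lemma paritySum_two_mul (N : ℕ) :
    paritySum X (2 * N) 0 = N * (X - 2 * N + 2) ∧ paritySum X (2 * N) 1 = N * (X - 2 * N) := by
  induction N with
  | zero => simp [paritySum_zero]
  | succ N ih =>
    have h0 : ((2 * N : ℕ) : ZMod 2) = 0 := by simp [show (2 : ZMod 2) = 0 from rfl]
    have h1 : ((2 * N + 1 : ℕ) : ZMod 2) = 1 := by simp [show (2 : ZMod 2) = 0 from rfl]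
    rw [show 2 * (N + 1) = 2 * N + 1 + 1 by ring, paritySum_succ, paritySum_succ, paritySum_succ,
      paritySum_succ, h0, h1, ih.1, ih.2]
    simp only [if_true, one_ne_zero, zero_ne_one, if_false]
    constructor
    · push_cast; ring
    · push_cast; ring

lemma paritySum_two_mul_add_one (N : ℕ) :
    paritySum X (2 * N + 1) 0 = (N + 1) * (X - 2 * N) ∧
      paritySum X (2 * N + 1) 1 = N * (X - 2 * N) := by
  have h0 : ((2 * N : ℕ) : ZMod 2) = 0 := by simp [show (2 : ZMod 2) = 0 from rfl]
  rw [paritySum_succ, paritySum_succ, h0, (paritySum_two_mul X N).1, (paritySum_two_mul X N).2]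
  simp only [if_true, zero_ne_one, if_false]
  constructor
  · push_cast; ring
  · ring

end paritySum

/-- The quantity `m` of the statement for `V_a^{w1}` and `V_b^{w2}`, both traces written as weight
sums. -/
def homTraceDefect (a b : ℕ) (w1 w2 : ZMod 2) : K :=
  paritySum ((a : K) + b) (min (a + 1) (b + 1)) (w1 + w2 + a) +
    paritySum ((a : K) + b) (min (a + 1) (b + 1)) (w1 + w2 + b) - ((a + 1) * (b + 1) : ℕ)

section homTraceDefect

variable {a b : ℕ} {w1 w2 : ZMod 2}

lemma homTraceDefect_of_ne (h : (a + 1) % 2 ≠ (b + 1) % 2) :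
    (homTraceDefect a b w1 w2 : K) = -((min (a + 1) (b + 1) : ℕ) : K) := by
  have hb : (b : ZMod 2) = a + 1 := by
    exact_mod_cast (ZMod.natCast_eq_natCast_iff' b (a + 1) 2).mpr (by omega)
  rw [homTraceDefect, hb, ← add_assoc, paritySum_add_paritySum_add_one]
  linear_combination (norm := (push_cast; ring))
    -((min (a + 1) (b + 1) : ℕ) : K) * natCast_min_add_natCast_max (K := K) (a + 1) (b + 1) +
      natCast_min_mul_natCast_max (K := K) (a + 1) (b + 1)

lemma homTraceDefect_of_eq (h : (a + 1) % 2 = (b + 1) % 2) :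
    (homTraceDefect a b w1 w2 : K) =
      2 * paritySum (((min (a + 1) (b + 1) : ℕ) : K) + (max (a + 1) (b + 1) : ℕ) - 2)
        (min (a + 1) (b + 1)) (w1 + w2 + a) -
      ((min (a + 1) (b + 1) : ℕ) : K) * (max (a + 1) (b + 1) : ℕ) := by
  have hX : ((min (a + 1) (b + 1) : ℕ) : K) + (max (a + 1) (b + 1) : ℕ) - 2 = a + b := by
    rw [natCast_min_add_natCast_max]
    push_cast
    ring
  rw [hX, homTraceDefect, (ZMod.natCast_eq_natCast_iff' b a 2).mpr (by omega),
    natCast_min_mul_natCast_max]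
  ring

lemma homTraceDefect_of_even_of_eq (ha : (a + 1) % 2 = 0) (hb : (b + 1) % 2 = 0) (hw : w1 = w2) :
    (homTraceDefect a b w1 w2 : K) = -(2 * ((min (a + 1) (b + 1) : ℕ) : K)) := by
  obtain ⟨N, hN⟩ : ∃ N, min (a + 1) (b + 1) = 2 * N := ⟨min (a + 1) (b + 1) / 2, by omega⟩
  have hc : w1 + w2 + (a : ZMod 2) = 1 := by
    rw [hw, CharTwo.add_self_eq_zero, zero_add]
    exact_mod_cast (ZMod.natCast_eq_natCast_iff' a 1 2).mpr (by omega)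
  rw [homTraceDefect_of_eq (by omega), hc, hN, (paritySum_two_mul _ N).2]
  push_cast
  ring

lemma homTraceDefect_of_even_of_ne (ha : (a + 1) % 2 = 0) (hb : (b + 1) % 2 = 0) (hw : w1 ≠ w2) :
    (homTraceDefect a b w1 w2 : K) = 0 := by
  obtain ⟨N, hN⟩ : ∃ N, min (a + 1) (b + 1) = 2 * N := ⟨min (a + 1) (b + 1) / 2, by omega⟩
  have hc : w1 + w2 + (a : ZMod 2) = 0 := by
    have : ∀ x y : ZMod 2, x ≠ y → x + y + 1 = 0 := by decide
    have ha' : (a : ZMod 2) = 1 := by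
      exact_mod_cast (ZMod.natCast_eq_natCast_iff' a 1 2).mpr (by omega)
    rw [ha', this _ _ hw]
  rw [homTraceDefect_of_eq (by omega), hc, hN, (paritySum_two_mul _ N).1]
  push_cast
  ring

lemma homTraceDefect_of_odd_of_eq (ha : (a + 1) % 2 = 1) (hb : (b + 1) % 2 = 1) (hw : w1 = w2) :
    (homTraceDefect a b w1 w2 : K) =
      ((max (a + 1) (b + 1) - min (a + 1) (b + 1) : ℕ) : K) - 1 := by
  obtain ⟨N, hN⟩ : ∃ N, min (a + 1) (b + 1) = 2 * N + 1 := ⟨min (a + 1) (b + 1) / 2, by omega⟩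
  have hc : w1 + w2 + (a : ZMod 2) = 0 := by
    rw [hw, CharTwo.add_self_eq_zero, zero_add]
    exact_mod_cast (ZMod.natCast_eq_natCast_iff' a 0 2).mpr (by omega)
  rw [homTraceDefect_of_eq (by omega), Nat.cast_sub min_le_max, hc, hN,
    (paritySum_two_mul_add_one _ N).1]
  push_cast
  ring

lemma homTraceDefect_of_odd_of_ne (ha : (a + 1) % 2 = 1) (hb : (b + 1) % 2 = 1) (hw : w1 ≠ w2) :
    (homTraceDefect a b w1 w2 : K) = -(((a + 1 : ℕ) : K) + ((b + 1 : ℕ) : K) - 1) := by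
  obtain ⟨N, hN⟩ : ∃ N, min (a + 1) (b + 1) = 2 * N + 1 := ⟨min (a + 1) (b + 1) / 2, by omega⟩
  have hc : w1 + w2 + (a : ZMod 2) = 1 := by
    have : ∀ x y : ZMod 2, x ≠ y → x + y = 1 := by decide
    have ha' : (a : ZMod 2) = 0 := by
      exact_mod_cast (ZMod.natCast_eq_natCast_iff' a 0 2).mpr (by omega)
    rw [ha', add_zero, this _ _ hw]
  rw [homTraceDefect_of_eq (by omega), ← natCast_min_add_natCast_max (a + 1) (b + 1), hc, hN,
    (paritySum_two_mul_add_one _ N).2]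
  push_cast
  ring

end homTraceDefect

namespace Sl2Rel

variable {e h f : Module.End K V} (hrel : Sl2Rel e h f) {v : V} {μ : K}
include hrel

lemma h_f_apply (x : V) : h (f x) = f (h x) - (2 : K) • f x := by
  have := LinearMap.congr_fun hrel.2.1 x
  simp only [LinearMap.sub_apply, Module.End.mul_apply, LinearMap.neg_apply,
    LinearMap.smul_apply, ← Nat.cast_smul_eq_nsmul K] at this
  linear_combination (norm := module) this

lemma e_f_apply (x : V) : e (f x) = f (e x) + h x := by
  rw [← hrel.2.2]
  simp

lemma h_f_pow_apply (hvh : h v = μ • v) (n : ℕ) :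
    h ((f ^ n) v) = (μ - 2 * n) • (f ^ n) v := by
  induction n with
  | zero => simpa using hvh
  | succ n ih =>
    rw [pow_succ', Module.End.mul_apply, hrel.h_f_apply, ih, map_smul, ← sub_smul]
    push_cast
    ring_nf

lemma e_f_pow_succ_apply (hve : e v = 0) (hvh : h v = μ • v) (n : ℕ) :
    e ((f ^ (n + 1)) v) = ((n + 1) * (μ - n)) • (f ^ n) v := by
  induction n with
  | zero => simp [hrel.e_f_apply, hve, hvh]
  | succ n ih =>
    rw [pow_succ', Module.End.mul_apply, hrel.e_f_apply, ih, map_smul,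
      hrel.h_f_pow_apply hvh, ← Module.End.mul_apply, ← pow_succ', ← add_smul]
    push_cast
    ring_nf

lemma f_pow_apply_ne_zero [CharZero K] {lam : ℕ} (hv : v ≠ 0) (hve : e v = 0)
    (hvh : h v = (lam : K) • v) {i : ℕ} (hi : i ≤ lam) : (f ^ i) v ≠ 0 := by
  induction i with
  | zero => simpa using hv
  | succ i ih =>
    intro hzero
    have := hrel.e_f_pow_succ_apply hve hvh i
    rw [hzero, map_zero, eq_comm, smul_eq_zero] at this
    refine this.elim (fun hc => ?_) (ih (by omega))
    rcases mul_eq_zero.mp hc with hc | hc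
    · exact Nat.cast_add_one_ne_zero i hc
    · have : (lam : K) = i := sub_eq_zero.mp hc
      norm_cast at this
      omega

lemma f_pow_succ_apply_eq_zero [CharZero K] [FiniteDimensional K V] {lam : ℕ} (hv : v ≠ 0)
    (hve : e v = 0) (hvh : h v = (lam : K) • v) : (f ^ (lam + 1)) v = 0 := by
  obtain ⟨hhe, hhf, hef⟩ := hrel
  -- Mathlib's `IsSl2Triple` requires `h ≠ 0`; for `h = 0` the relations force `f = 0`.
  by_cases hh : h = 0
  · have hf : f = 0 := by simpa [hh, ← Nat.cast_smul_eq_nsmul K] using hhf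
    simp [hf]
  let := LieRing.ofAssociativeRing (A := Module.End K V)
  have t : IsSl2Triple h e f := ⟨hh, hef, hhe, hhf⟩
  have P : t.HasPrimitiveVectorWith v (lam : K) := ⟨hv, hvh, hve⟩
  exact P.pow_toEnd_f_eq_zero_of_eq_nat rfl

end Sl2Rel

/-- A string basis of `V_lam^{p0}`, indexed from its highest weight vector `u 0`. -/
structure Sl2String (e h : Module.End K V) (V0 V1 : Submodule K V) (lam : ℕ) (p0 : ZMod 2) where
  u : ℕ → V
  u_of_lt : ∀ j, lam < j → u j = 0
  basis : Module.Basis (Fin (lam + 1)) K V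
  basis_apply : ∀ i : Fin (lam + 1), basis i = u i
  e_u_zero : e (u 0) = 0
  e_u_succ : ∀ j, j < lam → e (u (j + 1)) = u j
  h_u : ∀ j, h (u j) = ((lam : K) - 2 * j) • u j
  u_mem : ∀ j : ℕ, u j ∈ gradedPart V0 V1 (p0 + j)

-- Since `e (f^(j+1) v) = (j+1)(lam-j) • f^j v`, dividing `f^j v` by this makes `e` lower the index.
def stringCoeff (lam j : ℕ) : K := ∏ i ∈ range j, ((i + 1) * ((lam : K) - i))

lemma stringCoeff_succ (lam j : ℕ) :
    (stringCoeff lam (j + 1) : K) = stringCoeff lam j * ((j + 1) * ((lam : K) - j)) :=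
  prod_range_succ _ _

lemma stringCoeff_ne_zero [CharZero K] {lam j : ℕ} (hj : j ≤ lam) :
    (stringCoeff lam j : K) ≠ 0 := by
  refine prod_ne_zero_iff.mpr fun i hi => mul_ne_zero (Nat.cast_add_one_ne_zero i) ?_
  rw [sub_ne_zero, Ne, Nat.cast_inj]
  have := mem_range.mp hi
  omega

def stringVec (f : Module.End K V) (v : V) (lam j : ℕ) : V :=
  if j ≤ lam then (stringCoeff lam j : K)⁻¹ • (f ^ j) v else 0

section stringVec

variable {f : Module.End K V} {v : V} {lam j : ℕ}

lemma stringVec_zero : stringVec f v lam 0 = v := by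
  simp [stringVec, stringCoeff]

lemma stringVec_of_le (hj : j ≤ lam) :
    stringVec f v lam j = (stringCoeff lam j : K)⁻¹ • (f ^ j) v := if_pos hj

lemma stringVec_of_lt (hj : lam < j) : stringVec f v lam j = 0 := if_neg (by omega)

lemma stringVec_mem_span (f : Module.End K V) (v : V) (lam j : ℕ) :
    stringVec f v lam j ∈
      Submodule.span K (Set.range fun i : Fin (lam + 1) => stringVec f v lam i) := by
  rcases le_or_gt j lam with hj | hj
  · exact Submodule.subset_span ⟨⟨j, by omega⟩, rfl⟩
  · rw [stringVec_of_lt hj]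
    exact zero_mem _

lemma Sl2Grading.stringVec_mem {e h : Module.End K V} {V0 V1 : Submodule K V}
    (hgr : Sl2Grading e h f V0 V1) {p0 : ZMod 2} (hvp : v ∈ gradedPart V0 V1 p0) (j : ℕ) :
    stringVec f v lam j ∈ gradedPart V0 V1 (p0 + j) := by
  have hf : ∀ j : ℕ, (f ^ j) v ∈ gradedPart V0 V1 (p0 + j) := by
    intro j
    induction j with
    | zero => simpa using hvp
    | succ j ih => simpa [pow_succ', add_assoc] using hgr.f_mem ih
  unfold stringVec
  split_ifs
  · exact Submodule.smul_mem _ _ (hf j)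
  · exact zero_mem _

variable {e h : Module.End K V} (hrel : Sl2Rel e h f) (hve : e v = 0) (hvh : h v = (lam : K) • v)
include hrel hvh

lemma Sl2Rel.h_stringVec (j : ℕ) :
    h (stringVec f v lam j) = ((lam : K) - 2 * j) • stringVec f v lam j := by
  unfold stringVec
  split_ifs
  · rw [map_smul, hrel.h_f_pow_apply hvh, smul_comm]
  · simp

variable [CharZero K]
include hve

lemma Sl2Rel.stringVec_ne_zero (hv : v ≠ 0) (hj : j ≤ lam) : stringVec f v lam j ≠ 0 := by
  rw [stringVec_of_le hj]
  exact smul_ne_zero (inv_ne_zero (stringCoeff_ne_zero hj)) (hrel.f_pow_apply_ne_zero hv hve hvh hj)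

lemma Sl2Rel.e_stringVec_succ (hj : j < lam) :
    e (stringVec f v lam (j + 1)) = stringVec f v lam j := by
  rw [stringVec_of_le hj, stringVec_of_le (by omega), map_smul, hrel.e_f_pow_succ_apply hve hvh,
    smul_smul, stringCoeff_succ, mul_inv, mul_assoc, inv_mul_cancel₀]
  · simp
  · exact mul_ne_zero (Nat.cast_add_one_ne_zero j) (sub_ne_zero.mpr (by norm_cast; omega))

lemma Sl2Rel.f_stringVec [FiniteDimensional K V] (hv : v ≠ 0) (j : ℕ) :
    f (stringVec f v lam j) =
      ((stringCoeff lam (j + 1) : K) / stringCoeff lam j) • stringVec f v lam (j + 1) := by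
  rcases lt_trichotomy j lam with hj | rfl | hj
  · rw [stringVec_of_le hj.le, stringVec_of_le hj, map_smul, smul_smul, ← Module.End.mul_apply,
      ← pow_succ']
    have := stringCoeff_ne_zero (K := K) hj
    congr 1
    field_simp
  · rw [stringVec_of_le le_rfl, map_smul, ← Module.End.mul_apply, ← pow_succ',
      hrel.f_pow_succ_apply_eq_zero hv hve hvh, stringVec_of_lt (Nat.lt_succ_self _)]
    simp
  · rw [stringVec_of_lt hj, stringVec_of_lt (by omega)]
    simp

end stringVec

section stringBasis

variable [CharZero K] {e h f : Module.End K V} (hrel : Sl2Rel e h f) {v : V} (hv : v ≠ 0)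
  {lam : ℕ} (hve : e v = 0) (hvh : h v = (lam : K) • v)
include hrel hv hve hvh

lemma Sl2Rel.linearIndependent_stringVec :
    LinearIndependent K fun i : Fin (lam + 1) => stringVec f v lam i := by
  refine h.eigenvectors_linearIndependent' (fun i : Fin (lam + 1) => (lam : K) - 2 * (i : ℕ))
    (fun i j hij => ?_) _ fun i => ⟨?_, hrel.stringVec_ne_zero hve hvh hv (by omega)⟩
  · simpa [Fin.ext_iff] using hij
  · exact Module.End.mem_eigenspace_iff.mpr (hrel.h_stringVec hvh i)

lemma Sl2Rel.span_stringVec_eq_top [FiniteDimensional K V]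
    (hirr : ∀ U : Submodule K V, Sl2Inv e h f U → U = ⊥ ∨ U = ⊤) :
    Submodule.span K (Set.range fun i : Fin (lam + 1) => stringVec f v lam i) = ⊤ := by
  set U := Submodule.span K (Set.range fun i : Fin (lam + 1) => stringVec f v lam i)
  have hU : ∀ T : Module.End K V, (∀ j, T (stringVec f v lam j) ∈ U) → ∀ x ∈ U, T x ∈ U :=
    fun T hT x hx => (Submodule.span_le (p := U.comap T)).mpr (by rintro _ ⟨i, rfl⟩; exact hT i) hx
  refine (hirr U ⟨hU e fun j => ?_, hU h fun j => ?_, hU f fun j => ?_⟩).resolve_left fun hbot => ?_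
  · rcases j with _ | j
    · simp [stringVec_zero, hve]
    rcases lt_or_ge j lam with hj | hj
    · rw [hrel.e_stringVec_succ hve hvh hj]
      exact stringVec_mem_span f v lam j
    · simp [stringVec_of_lt (show lam < j + 1 by omega)]
  · rw [hrel.h_stringVec hvh]
    exact Submodule.smul_mem _ _ (stringVec_mem_span f v lam j)
  · rw [hrel.f_stringVec hve hvh hv]
    exact Submodule.smul_mem _ _ (stringVec_mem_span f v lam _)
  · have hvU : v ∈ U := by simpa only [stringVec_zero] using stringVec_mem_span f v lam 0
    rw [hbot, Submodule.mem_bot] at hvU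
    exact hv hvU

end stringBasis

noncomputable def Sl2Rel.sl2String [CharZero K] [FiniteDimensional K V] {e h f : Module.End K V}
    (hrel : Sl2Rel e h f) {V0 V1 : Submodule K V} (hgr : Sl2Grading e h f V0 V1)
    (hirr : ∀ U : Submodule K V, Sl2Inv e h f U → U = ⊥ ∨ U = ⊤) {v : V} (hv : v ≠ 0)
    {lam : ℕ} (hve : e v = 0) (hvh : h v = (lam : K) • v) {p0 : ZMod 2}
    (hvp : v ∈ gradedPart V0 V1 p0) : Sl2String e h V0 V1 lam p0 where
  u := stringVec f v lam
  u_of_lt _ := stringVec_of_lt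
  basis := Module.Basis.mk (hrel.linearIndependent_stringVec hv hve hvh)
    (hrel.span_stringVec_eq_top hv hve hvh hirr).ge
  basis_apply := Module.Basis.mk_apply _ _
  e_u_zero := by rw [stringVec_zero, hve]
  e_u_succ _ := hrel.e_stringVec_succ hve hvh
  h_u := hrel.h_stringVec hvh
  u_mem := hgr.stringVec_mem hvp

namespace Sl2String

variable {e h : Module.End K V} {V0 V1 : Submodule K V} {lam : ℕ} {p0 : ZMod 2}
  (S : Sl2String e h V0 V1 lam p0)

lemma e_pow_u {j : ℕ} (hj : j ≤ lam) (k : ℕ) :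
    (e ^ k) (S.u j) = if k ≤ j then S.u (j - k) else 0 := by
  induction k with
  | zero => simp
  | succ k ih =>
    rw [pow_succ', Module.End.mul_apply, ih]
    split_ifs with hk hk' hk'
    · rw [show j - k = j - (k + 1) + 1 by omega, S.e_u_succ _ (by omega)]
    · rw [show j - k = 0 by omega, S.e_u_zero]
    · omega
    · exact map_zero e

lemma u_eq_e_pow_u_last {j : ℕ} (hj : j ≤ lam) : S.u j = (e ^ (lam - j)) (S.u lam) := by
  rw [S.e_pow_u le_rfl, if_pos (Nat.sub_le _ _), Nat.sub_sub_self hj]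

lemma e_pow_succ_u_last : (e ^ (lam + 1)) (S.u lam) = 0 := by
  rw [S.e_pow_u le_rfl, if_neg (by omega)]

lemma h_e_pow_u {j : ℕ} (hj : j ≤ lam) (k : ℕ) :
    h ((e ^ k) (S.u j)) = ((lam : K) - 2 * j + 2 * k) • (e ^ k) (S.u j) := by
  rw [S.e_pow_u hj]
  split_ifs with hk
  · rw [S.h_u, Nat.cast_sub hk]
    ring_nf
  · simp

lemma e_pow_u_mem {j : ℕ} (hj : j ≤ lam) (k : ℕ) :
    (e ^ k) (S.u j) ∈ gradedPart V0 V1 (p0 + j + k) := by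
  rw [S.e_pow_u hj]
  split_ifs with hk
  · convert S.u_mem (j - k) using 2
    rw [Nat.cast_sub hk, CharTwo.sub_eq_add, add_assoc]
  · exact zero_mem _

lemma span_basis_image_eq (hc : IsCompl V0 V1) (q : ZMod 2) :
    Submodule.span K (S.basis '' {i | p0 + (i : ℕ) = q}) = gradedPart V0 V1 q := by
  have hle : ∀ q, Submodule.span K (S.basis '' {i | p0 + (i : ℕ) = q}) ≤ gradedPart V0 V1 q :=
    fun q => Submodule.span_le.mpr <| by
      rintro _ ⟨i, rfl, rfl⟩
      simpa [S.basis_apply] using S.u_mem i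
  refine (le_iff_eq_of_codisjoint_of_disjoint
    (b := Submodule.span K (S.basis '' {i | p0 + (i : ℕ) = q + 1})) ?_
    ((hc.gradedPart q).disjoint.symm.mono_left (hle _))).mp (hle q)
  rw [codisjoint_iff, ← Submodule.span_union, ← Set.image_union, eq_top_iff, ← S.basis.span_eq]
  refine Submodule.span_mono (Set.range_subset_iff.mpr fun i => ⟨i, ?_, rfl⟩)
  have : ∀ a q : ZMod 2, a = q ∨ a = q + 1 := by decide
  exact this _ q

lemma repr_eq_zero_of_mem_gradedPart (hc : IsCompl V0 V1) {y : V} {q : ZMod 2}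
    (hy : y ∈ gradedPart V0 V1 q) {i : Fin (lam + 1)} (hi : p0 + (i : ℕ) ≠ q) :
    S.basis.repr y i = 0 := by
  rw [← S.span_basis_image_eq hc, Module.Basis.mem_span_image] at hy
  by_contra hne
  exact hi (hy (Finsupp.mem_support_iff.mpr hne))

lemma repr_eq_zero_of_e_pow_eq_zero {y : V} {k : ℕ} (hy : (e ^ k) y = 0) {i : Fin (lam + 1)}
    (hi : k ≤ i) : S.basis.repr y i = 0 := by
  have hcoord : ∀ i' : Fin (lam + 1),
      S.basis.repr ((e ^ k) (S.basis i')) ⟨i - k, by omega⟩ = if i' = i then 1 else 0 := by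
    intro i'
    rw [S.basis_apply, S.e_pow_u (by omega)]
    by_cases hk : k ≤ i'
    · rw [if_pos hk, show S.u (i' - k) = S.basis ⟨i' - k, by omega⟩ from
          (S.basis_apply ⟨i' - k, by omega⟩).symm,
        S.basis.repr_self, Finsupp.single_apply]
      simp only [Fin.ext_iff]
      exact if_congr (by omega) rfl rfl
    · rw [if_neg hk, map_zero, Finsupp.zero_apply, if_neg (by rintro rfl; exact hk hi)]
  calc S.basis.repr y i = ∑ i', S.basis.repr y i' * if i' = i then 1 else 0 := by simp
    _ = S.basis.repr ((e ^ k) y) ⟨i - k, by omega⟩ := by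
      conv_rhs => rw [← S.basis.sum_repr y]
      simp only [map_sum, map_smul, Finsupp.coe_finsetSum, Finset.sum_apply, Finsupp.smul_apply,
        hcoord, smul_eq_mul]
    _ = 0 := by rw [hy, map_zero, Finsupp.zero_apply]

lemma mem_span_u_image (hc : IsCompl V0 V1) {y : V} {q : ZMod 2}
    (hy : y ∈ gradedPart V0 V1 q) {k : ℕ} (hk : (e ^ k) y = 0) :
    y ∈ Submodule.span K (S.u '' parityRange (min k (lam + 1)) (p0 + q)) := by
  rw [← S.basis.sum_repr y]
  refine Submodule.sum_mem _ fun i _ => ?_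
  by_cases hi : (i : ℕ) < k ∧ p0 + (i : ℕ) = q
  · refine Submodule.smul_mem _ _ (Submodule.subset_span ⟨i, ?_, (S.basis_apply i).symm⟩)
    refine mem_parityRange.mpr ⟨lt_min hi.1 i.is_lt, ?_⟩
    rw [← hi.2, ← add_assoc, CharTwo.add_self_eq_zero, zero_add]
  · rw [not_and_or, not_lt] at hi
    rcases hi with hi | hi
    · simp [S.repr_eq_zero_of_e_pow_eq_zero hk hi]
    · simp [S.repr_eq_zero_of_mem_gradedPart hc hy hi]

end Sl2String

section homOfLowest

variable {W : Type*} [AddCommGroup W] [Module K W]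

namespace Sl2String

variable {eV hV : Module.End K V} {V0 V1 : Submodule K V} {lam1 : ℕ} {w1 : ZMod 2}
  {eW hW : Module.End K W} {W0 W1 : Submodule K W} {lam2 : ℕ} {w2 : ZMod 2}
  (SV : Sl2String eV hV V0 V1 lam1 w1) (SW : Sl2String eW hW W0 W1 lam2 w2)

lemma eq_zero_of_apply_u_last {ψ : V →ₗ[K] W} (hψ : eW ∘ₗ ψ - ψ ∘ₗ eV = 0)
    (h0 : ψ (SV.u lam1) = 0) : ψ = 0 := by
  refine SV.basis.ext fun i => ?_
  rw [SV.basis_apply, SV.u_eq_e_pow_u_last i.is_le, ← LinearMap.comp_apply,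
    ← Module.End.commute_pow_left_of_commute (sub_eq_zero.mp hψ), LinearMap.comp_apply, h0,
    map_zero, LinearMap.zero_apply]

noncomputable def homOfLowest (j : ℕ) : V →ₗ[K] W :=
  SV.basis.constr K fun i => (eW ^ (lam1 - i)) (SW.u j)

lemma homOfLowest_apply_u {j k : ℕ} (hk : k ≤ lam1) :
    SV.homOfLowest SW j (SV.u k) = (eW ^ (lam1 - k)) (SW.u j) := by
  rw [← SV.basis_apply ⟨k, by omega⟩, homOfLowest, SV.basis.constr_basis]

lemma homOfLowest_apply_u_last (j : ℕ) : SV.homOfLowest SW j (SV.u lam1) = SW.u j := by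
  simp [SV.homOfLowest_apply_u SW le_rfl]

lemma e_comp_homOfLowest {j : ℕ} (hj1 : j ≤ lam1) (hj2 : j ≤ lam2) :
    eW ∘ₗ SV.homOfLowest SW j - SV.homOfLowest SW j ∘ₗ eV = 0 := by
  rw [sub_eq_zero]
  refine SV.basis.ext fun i => ?_
  rw [SV.basis_apply, LinearMap.comp_apply, LinearMap.comp_apply,
    SV.homOfLowest_apply_u SW i.is_le, ← Module.End.mul_apply, ← pow_succ']
  rcases Nat.eq_zero_or_pos (i : ℕ) with h0 | hpos
  · rw [h0, SV.e_u_zero, map_zero, SW.e_pow_u hj2, if_neg (by omega)]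
  · obtain ⟨i', hi'⟩ : ∃ i', (i : ℕ) = i' + 1 := ⟨i - 1, by omega⟩
    rw [hi', SV.e_u_succ _ (by omega), SV.homOfLowest_apply_u SW (by omega)]
    congr 2
    omega

lemma h_comp_homOfLowest {j : ℕ} (hj : j ≤ lam2) :
    hW ∘ₗ SV.homOfLowest SW j - SV.homOfLowest SW j ∘ₗ hV =
      ((lam1 + lam2 : K) - 2 * j) • SV.homOfLowest SW j := by
  refine SV.basis.ext fun i => ?_
  simp only [LinearMap.sub_apply, LinearMap.comp_apply, LinearMap.smul_apply, SV.basis_apply]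
  rw [SV.h_u, map_smul, SV.homOfLowest_apply_u SW i.is_le, SW.h_e_pow_u hj, ← sub_smul,
    Nat.cast_sub i.is_le]
  ring_nf

lemma homOfLowest_mem_gradedPart (hcV : IsCompl V0 V1) {j : ℕ} (hj : j ≤ lam2)
    (hjp : (j : ZMod 2) = w1 + w2 + lam1) (p : ZMod 2) :
    ∀ x ∈ gradedPart V0 V1 p, SV.homOfLowest SW j x ∈ gradedPart W0 W1 p := by
  rw [← SV.span_basis_image_eq hcV p]
  refine fun x hx => (Submodule.span_le (p := (gradedPart W0 W1 p).comap _)).mpr ?_ hx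
  rintro _ ⟨i, rfl, rfl⟩
  rw [SV.basis_apply, SetLike.mem_coe, Submodule.mem_comap, SV.homOfLowest_apply_u SW i.is_le]
  convert SW.e_pow_u_mem hj (lam1 - i) using 2
  have h2 : (2 : ZMod 2) = 0 := rfl
  rw [Nat.cast_sub i.is_le, hjp]
  linear_combination ((i : ℕ) - w2 - (lam1 : ZMod 2)) * h2

lemma linearIndependent_homOfLowest {T : Set ℕ} (hT : ∀ j ∈ T, j ≤ lam2) :
    LinearIndependent K fun j : T => SV.homOfLowest SW j := by
  refine LinearIndependent.of_comp (LinearMap.applyₗ (SV.u lam1)) ?_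
  have : (LinearMap.applyₗ (SV.u lam1) ∘ fun j : T => SV.homOfLowest SW j) =
      SW.basis ∘ fun j : T => ⟨j, Nat.lt_succ_of_le (hT j j.2)⟩ := by
    funext j
    simp [homOfLowest_apply_u_last, SW.basis_apply]
  rw [this]
  exact SW.basis.linearIndependent.comp _ fun a b hab => Subtype.ext (congrArg Fin.val hab)

variable (hcV : IsCompl V0 V1) (hcW : IsCompl W0 W1) {E12 : Submodule K (V →ₗ[K] W)}
  (hE12 : ∀ φ : V →ₗ[K] W, φ ∈ E12 ↔
    (eW ∘ₗ φ - φ ∘ₗ eV = 0 ∧ (∀ x ∈ V0, φ x ∈ W0) ∧ (∀ x ∈ V1, φ x ∈ W1)))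
include hcV hE12

lemma homOfLowest_mem {j : ℕ} (hj : j ∈ parityRange (min (lam1 + 1) (lam2 + 1)) (w1 + w2 + lam1)) :
    SV.homOfLowest SW j ∈ E12 := by
  obtain ⟨hjlt, hjp⟩ := mem_parityRange.mp hj
  rw [hE12, forall_mem_gradedPart_iff]
  exact ⟨SV.e_comp_homOfLowest SW (by omega) (by omega),
    SV.homOfLowest_mem_gradedPart SW hcV (by omega) hjp⟩

include hcW

lemma eq_span_homOfLowest :
    E12 = Submodule.span K (Set.range fun j : (parityRange (min (lam1 + 1) (lam2 + 1))
      (w1 + w2 + lam1) : Set ℕ) => SV.homOfLowest SW j) := by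
  rw [← Set.image_eq_range]
  have hle : Submodule.span K (SV.homOfLowest SW '' parityRange (min (lam1 + 1) (lam2 + 1))
      (w1 + w2 + lam1)) ≤ E12 :=
    Submodule.span_le.mpr <| by rintro _ ⟨j, hj, rfl⟩; exact SV.homOfLowest_mem SW hcV hE12 hj
  refine le_antisymm (fun φ hφ => ?_) hle
  obtain ⟨hφe, hφgr⟩ := (hE12 φ).mp hφ
  have hy : φ (SV.u lam1) ∈ Submodule.span K (SW.u '' parityRange (min (lam1 + 1) (lam2 + 1))
      (w1 + w2 + lam1)) := by
    rw [show w1 + w2 + (lam1 : ZMod 2) = w2 + (w1 + lam1) by ring]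
    refine SW.mem_span_u_image hcW ((forall_mem_gradedPart_iff φ).mp hφgr _ _ (SV.u_mem lam1)) ?_
    rw [← LinearMap.comp_apply, Module.End.commute_pow_left_of_commute (sub_eq_zero.mp hφe),
      LinearMap.comp_apply, SV.e_pow_succ_u_last, map_zero]
  obtain ⟨l, hl, hly⟩ := (Finsupp.mem_span_image_iff_linearCombination K).mp hy
  have hψ : Finsupp.linearCombination K (SV.homOfLowest SW) l ∈ Submodule.span K
      (SV.homOfLowest SW '' parityRange (min (lam1 + 1) (lam2 + 1)) (w1 + w2 + lam1)) :=
    (Finsupp.mem_span_image_iff_linearCombination K).mpr ⟨l, hl, rfl⟩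
  suffices φ - Finsupp.linearCombination K (SV.homOfLowest SW) l = 0 by
    rwa [sub_eq_zero.mp this]
  refine SV.eq_zero_of_apply_u_last ((hE12 _).mp (sub_mem hφ (hle hψ))).1 ?_
  rw [LinearMap.sub_apply, sub_eq_zero, ← hly]
  simp [Finsupp.linearCombination_apply, Finsupp.sum, homOfLowest_apply_u_last]

include SV SW in
theorem trace_restrict_eq_paritySum (H12 : Module.End K (V →ₗ[K] W))
    (hH12 : ∀ φ, H12 φ = hW ∘ₗ φ - φ ∘ₗ hV) (hinv12 : ∀ φ ∈ E12, H12 φ ∈ E12) :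
    LinearMap.trace K E12 (H12.restrict hinv12) =
      paritySum ((lam1 : K) + lam2) (min (lam1 + 1) (lam2 + 1)) (w1 + w2 + lam1) := by
  classical
  obtain rfl := SV.eq_span_homOfLowest SW hcV hcW hE12
  have hli := SV.linearIndependent_homOfLowest SW (T := parityRange (min (lam1 + 1) (lam2 + 1))
    (w1 + w2 + lam1)) fun j hj => by have := (mem_parityRange.mp hj).1; omega
  rw [LinearMap.trace_eq_sum_of_apply_basis (Module.Basis.span hli) _
    (fun j => ((lam1 + lam2 : K) - 2 * (j : ℕ))) fun j => ?_]
  · exact Finset.sum_coe_sort _ fun j : ℕ => ((lam1 + lam2 : K) - 2 * j)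
  · have hj := (mem_parityRange.mp j.2).1
    ext1
    rw [LinearMap.coe_restrict_apply, Module.Basis.span_apply, hH12,
      SV.h_comp_homOfLowest SW (by omega)]
    rfl

end Sl2String

end homOfLowest

theorem stmt12_general {K V W : Type*} [Field K] [CharZero K]
    [AddCommGroup V] [Module K V] [FiniteDimensional K V]
    [AddCommGroup W] [Module K W] [FiniteDimensional K W]
    (eV hV fV : Module.End K V) (hrelV : Sl2Rel eV hV fV)
    (V0 V1 : Submodule K V) (hgrV : Sl2Grading eV hV fV V0 V1)
    (hirrV : ∀ U : Submodule K V, Sl2Inv eV hV fV U → U = ⊥ ∨ U = ⊤)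
    (lam1 : ℕ) (w1 : ZMod 2)
    (v : V) (hv : v ≠ 0) (hve : eV v = 0) (hvh : hV v = (lam1 : K) • v)
    (hvpar : if w1 = 0 then v ∈ V0 else v ∈ V1)
    (eW hW fW : Module.End K W) (hrelW : Sl2Rel eW hW fW)
    (W0 W1 : Submodule K W) (hgrW : Sl2Grading eW hW fW W0 W1)
    (hirrW : ∀ U : Submodule K W, Sl2Inv eW hW fW U → U = ⊥ ∨ U = ⊤)
    (lam2 : ℕ) (w2 : ZMod 2)
    (w : W) (hw : w ≠ 0) (hwe : eW w = 0) (hwh : hW w = (lam2 : K) • w)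
    (hwpar : if w2 = 0 then w ∈ W0 else w ∈ W1)
    -- the actions of h on Hom(W1,W2) and Hom(W2,W1)
    (H12 : Module.End K (V →ₗ[K] W)) (hH12 : ∀ φ, H12 φ = hW ∘ₗ φ - φ ∘ₗ hV)
    (H21 : Module.End K (W →ₗ[K] V)) (hH21 : ∀ ψ, H21 ψ = hV ∘ₗ ψ - ψ ∘ₗ hW)
    -- the even parts of the kernels of the action of e on the Hom spaces
    (E12 : Submodule K (V →ₗ[K] W))
    (hE12 : ∀ φ : V →ₗ[K] W, φ ∈ E12 ↔
      (eW ∘ₗ φ - φ ∘ₗ eV = 0 ∧ (∀ x ∈ V0, φ x ∈ W0) ∧ (∀ x ∈ V1, φ x ∈ W1)))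
    (E21 : Submodule K (W →ₗ[K] V))
    (hE21 : ∀ ψ : W →ₗ[K] V, ψ ∈ E21 ↔
      (eV ∘ₗ ψ - ψ ∘ₗ eW = 0 ∧ (∀ x ∈ W0, ψ x ∈ V0) ∧ (∀ x ∈ W1, ψ x ∈ V1)))
    (hinv12 : ∀ φ ∈ E12, H12 φ ∈ E12) (hinv21 : ∀ ψ ∈ E21, H21 ψ ∈ E21)
    -- the quantity m, with r1 = λ1 + 1 and r2 = λ2 + 1
    (r1 r2 : ℕ) (hr1 : r1 = lam1 + 1) (hr2 : r2 = lam2 + 1)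
    (m : K)
    (hm : m = LinearMap.trace K _ (H12.restrict hinv12) +
              LinearMap.trace K _ (H21.restrict hinv21) - ((r1 * r2 : ℕ) : K)) :
    (r1 % 2 ≠ r2 % 2 → m = -((min r1 r2 : ℕ) : K)) ∧
    (r1 % 2 = 0 → r2 % 2 = 0 → w1 = w2 → m = -(2 * ((min r1 r2 : ℕ) : K))) ∧
    (r1 % 2 = 0 → r2 % 2 = 0 → w1 ≠ w2 → m = 0) ∧
    (r1 % 2 = 1 → r2 % 2 = 1 → w1 = w2 → m = ((max r1 r2 - min r1 r2 : ℕ) : K) - 1) ∧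
    (r1 % 2 = 1 → r2 % 2 = 1 → w1 ≠ w2 → m = -((r1 : K) + (r2 : K) - 1)) := by
  subst hr1 hr2
  have SV := hrelV.sl2String hgrV hirrV hv hve hvh (mem_gradedPart_iff.mpr hvpar)
  have SW := hrelW.sl2String hgrW hirrW hw hwe hwh (mem_gradedPart_iff.mpr hwpar)
  have h12 := SV.trace_restrict_eq_paritySum SW hgrV.1 hgrW.1 hE12 H12 hH12 hinv12
  have h21 := SW.trace_restrict_eq_paritySum SV hgrW.1 hgrV.1 hE21 H21 hH21 hinv21
  obtain rfl : m = homTraceDefect lam1 lam2 w1 w2 := by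
    rw [hm, h12, h21, add_comm (lam2 : K), min_comm (lam2 + 1), add_comm w2]
    rfl
  exact ⟨homTraceDefect_of_ne, homTraceDefect_of_even_of_eq, homTraceDefect_of_even_of_ne,
    homTraceDefect_of_odd_of_eq, homTraceDefect_of_odd_of_ne⟩

/-- With W1 = V_{λ1}^{w1}, W2 = V_{λ2}^{w2} irreducible graded
sl2-representations of dimensions r1 = λ1+1, r2 = λ2+1, the quantity
m = Tr(h | (Hom(W1,W2)^e)_0) + Tr(h | (Hom(W2,W1)^e)_0) − r1·r2 is given by the
case formula of Lemma `mij`. -/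
theorem stmt12 {K V W : Type*} [Field K] [CharZero K]
    [AddCommGroup V] [Module K V] [FiniteDimensional K V] [Nontrivial V]
    [AddCommGroup W] [Module K W] [FiniteDimensional K W] [Nontrivial W]
    (eV hV fV : Module.End K V) (hrelV : Sl2Rel eV hV fV)
    (V0 V1 : Submodule K V) (hgrV : Sl2Grading eV hV fV V0 V1)
    (hirrV : ∀ U : Submodule K V, Sl2Inv eV hV fV U → U = ⊥ ∨ U = ⊤)
    (lam1 : ℕ) (w1 : ZMod 2)
    (v : V) (hv : v ≠ 0) (hve : eV v = 0) (hvh : hV v = (lam1 : K) • v)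
    (hvpar : if w1 = 0 then v ∈ V0 else v ∈ V1)
    (eW hW fW : Module.End K W) (hrelW : Sl2Rel eW hW fW)
    (W0 W1 : Submodule K W) (hgrW : Sl2Grading eW hW fW W0 W1)
    (hirrW : ∀ U : Submodule K W, Sl2Inv eW hW fW U → U = ⊥ ∨ U = ⊤)
    (lam2 : ℕ) (w2 : ZMod 2)
    (w : W) (hw : w ≠ 0) (hwe : eW w = 0) (hwh : hW w = (lam2 : K) • w)
    (hwpar : if w2 = 0 then w ∈ W0 else w ∈ W1)
    -- the actions of h on Hom(W1,W2) and Hom(W2,W1)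
    (H12 : Module.End K (V →ₗ[K] W)) (hH12 : ∀ φ, H12 φ = hW ∘ₗ φ - φ ∘ₗ hV)
    (H21 : Module.End K (W →ₗ[K] V)) (hH21 : ∀ ψ, H21 ψ = hV ∘ₗ ψ - ψ ∘ₗ hW)
    -- the even parts of the kernels of the action of e on the Hom spaces
    (E12 : Submodule K (V →ₗ[K] W))
    (hE12 : ∀ φ : V →ₗ[K] W, φ ∈ E12 ↔
      (eW ∘ₗ φ - φ ∘ₗ eV = 0 ∧ (∀ x ∈ V0, φ x ∈ W0) ∧ (∀ x ∈ V1, φ x ∈ W1)))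
    (E21 : Submodule K (W →ₗ[K] V))
    (hE21 : ∀ ψ : W →ₗ[K] V, ψ ∈ E21 ↔
      (eV ∘ₗ ψ - ψ ∘ₗ eW = 0 ∧ (∀ x ∈ W0, ψ x ∈ V0) ∧ (∀ x ∈ W1, ψ x ∈ V1)))
    (hinv12 : ∀ φ ∈ E12, H12 φ ∈ E12) (hinv21 : ∀ ψ ∈ E21, H21 ψ ∈ E21)
    -- the quantity m, with r1 = λ1 + 1 and r2 = λ2 + 1
    (r1 r2 : ℕ) (hr1 : r1 = lam1 + 1) (hr2 : r2 = lam2 + 1)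
    (m : K)
    (hm : m = LinearMap.trace K _ (H12.restrict hinv12) +
              LinearMap.trace K _ (H21.restrict hinv21) - ((r1 * r2 : ℕ) : K)) :
    (r1 % 2 ≠ r2 % 2 → m = -((min r1 r2 : ℕ) : K)) ∧
    (r1 % 2 = 0 → r2 % 2 = 0 → w1 = w2 → m = -(2 * ((min r1 r2 : ℕ) : K))) ∧
    (r1 % 2 = 0 → r2 % 2 = 0 → w1 ≠ w2 → m = 0) ∧
    (r1 % 2 = 1 → r2 % 2 = 1 → w1 = w2 → m = ((max r1 r2 - min r1 r2 : ℕ) : K) - 1) ∧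
    (r1 % 2 = 1 → r2 % 2 = 1 → w1 ≠ w2 → m = -((r1 : K) + (r2 : K) - 1)) :=
  stmt12_general eV hV fV hrelV V0 V1 hgrV hirrV lam1 w1 v hv hve hvh hvpar eW hW fW hrelW W0 W1
    hgrW hirrW lam2 w2 w hw hwe hwh hwpar H12 hH12 H21 hH21 E12 hE12 E21 hE21 hinv12 hinv21 r1 r2
    hr1 hr2 m hm
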